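/- arXiv:2011.10810 — 3 statements merged into one kernel-verified Lean document; each statement's English description precedes it below -/
import Mathlib

section
/- Let C be a positive definite symmetric Toeplitz n×n matrix. For any indices i ≤ j in {1,…,n}, the linear MMSE of coordinate i from coordinates {1,…,n}∖{i} is at least the linear MMSE of coordinate i from coordinates {1,…,n+1}∖{i}, for any positive definite symmetric Toeplitz extension C' of C to size (n+1)×(n+1). Equivalently, [C⁻¹]_{i,i} ≤ [C'⁻¹]_{i,i}. -/
/-! The reciprocal `1 / [M⁻¹]ᵢᵢ` of a diagonal entry of the inverse of a positive definite
matrix is the minimum of the quadratic form `xᵀ M x` over vectors with `xᵢ = 1`: completing the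
square around the minimiser `M⁻¹ eᵢ / [M⁻¹]ᵢᵢ` gives the lower bound. A principal submatrix
restricts this minimum to vectors vanishing off its index set, so the minimum can only grow, and
its reciprocal `[A⁻¹]ᵢᵢ` can only shrink. The leading `n × n` block of the Toeplitz matrix of
size `n + 1` is the Toeplitz matrix of size `n`. -/

open Matrix Finset

/-- The symmetric Toeplitz matrix of size n built from the sequence c. -/
def toeplitz (c : ℕ → ℝ) (n : ℕ) : Matrix (Fin n) (Fin n) ℝ :=
  Matrix.of fun i j => c ((i : ℤ) - (j : ℤ)).natAbs

namespace Matrix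

variable {m n R : Type*} [Fintype m] [Fintype n]

theorem dotProduct_submatrix_mulVec_comp [NonUnitalNonAssocSemiring R] {f : m → n}
    (hf : Function.Injective f) (M : Matrix n n R) {y : n → R} (hy : ∀ j ∉ Set.range f, y j = 0) :
    (y ∘ f) ⬝ᵥ M.submatrix f f *ᵥ (y ∘ f) = y ⬝ᵥ M *ᵥ y := by
  have hrow : M.submatrix f f *ᵥ (y ∘ f) = (M *ᵥ y) ∘ f := by
    ext i
    exact Fintype.sum_of_injective f hf _ _ (fun j hj => by simp [hy j hj]) fun _ => rfl
  rw [hrow]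
  exact Fintype.sum_of_injective f hf _ _ (fun j hj => by simp [hy j hj]) fun _ => rfl

variable [DecidableEq n]

theorem dotProduct_mulVec_inv_mulVec_single [CommRing R] {M : Matrix n n R}
    (hM : IsUnit M.det) (x : n → R) (i : n) : x ⬝ᵥ M *ᵥ (M⁻¹ *ᵥ Pi.single i 1) = x i := by
  rw [mulVec_mulVec, mul_nonsing_inv _ hM, one_mulVec, dotProduct_single, mul_one]

theorem PosDef.inv_inv_apply_le_dotProduct_mulVec {M : Matrix n n ℝ} (hM : M.PosDef) {i : n}
    {x : n → ℝ} (hx : x i = 1) : (M⁻¹ i i)⁻¹ ≤ x ⬝ᵥ M *ᵥ x := by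
  set v := M⁻¹ *ᵥ Pi.single i 1
  have hdet : IsUnit M.det := hM.det_pos.ne'.isUnit
  have hxv : x ⬝ᵥ M *ᵥ v = 1 := by rw [dotProduct_mulVec_inv_mulVec_single hdet, hx]
  have hvx : v ⬝ᵥ M *ᵥ x = 1 := by
    rw [← dotProduct_transpose_mulVec, ← conjTranspose_eq_transpose_of_trivial,
      hM.isHermitian.eq, hxv]
  have hvv : v ⬝ᵥ M *ᵥ v = M⁻¹ i i := by
    rw [dotProduct_mulVec_inv_mulVec_single hdet]
    simp [v, mulVec_single]
  have hα : 0 < M⁻¹ i i := hM.inv.diag_pos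
  have hsq := hM.posSemidef.dotProduct_mulVec_nonneg (x - (M⁻¹ i i)⁻¹ • v)
  simp only [star_trivial, mulVec_sub, mulVec_smul, sub_dotProduct, dotProduct_sub,
    smul_dotProduct, dotProduct_smul, hxv, hvx, hvv, smul_eq_mul] at hsq
  field_simp at hsq
  rw [inv_le_iff_one_le_mul₀ hα]
  linarith

theorem PosDef.exists_apply_eq_one_dotProduct_mulVec_eq {M : Matrix n n ℝ} (hM : M.PosDef)
    (i : n) : ∃ x : n → ℝ, x i = 1 ∧ x ⬝ᵥ M *ᵥ x = (M⁻¹ i i)⁻¹ := by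
  have hdet : IsUnit M.det := hM.det_pos.ne'.isUnit
  have hα : M⁻¹ i i ≠ 0 := hM.inv.diag_pos.ne'
  have hvi : (M⁻¹ *ᵥ Pi.single i 1) i = M⁻¹ i i := by simp [mulVec_single]
  refine ⟨(M⁻¹ i i)⁻¹ • M⁻¹ *ᵥ Pi.single i 1, by simp [hα], ?_⟩
  rw [mulVec_smul, dotProduct_smul, dotProduct_mulVec_inv_mulVec_single hdet]
  simp only [Pi.smul_apply, hvi, smul_eq_mul]
  field_simp

variable [DecidableEq m]

theorem PosDef.inv_submatrix_apply_le {M : Matrix n n ℝ} (hM : M.PosDef) {f : m → n}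
    (hf : Function.Injective f) (i : m) : (M.submatrix f f)⁻¹ i i ≤ M⁻¹ (f i) (f i) := by
  obtain ⟨x, hxi, hxq⟩ := (hM.submatrix hf).exists_apply_eq_one_dotProduct_mulVec_eq i
  set y := Function.extend f x 0
  have hyf : y ∘ f = x := Function.extend_comp hf x 0
  have hy : ∀ j ∉ Set.range f, y j = 0 := fun j hj => Function.extend_apply' _ _ _ hj
  have hle := hM.inv_inv_apply_le_dotProduct_mulVec (i := f i) (x := y)
    (by simp [y, hf.extend_apply, hxi])
  rw [← dotProduct_submatrix_mulVec_comp hf M hy, hyf, hxq] at hle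
  exact (inv_le_inv₀ hM.inv.diag_pos (hM.submatrix hf).inv.diag_pos).1 hle

end Matrix

theorem toeplitz_eq_submatrix_castSucc (c : ℕ → ℝ) (n : ℕ) :
    toeplitz c n = (toeplitz c (n + 1)).submatrix Fin.castSucc Fin.castSucc := by
  ext
  simp [toeplitz]

theorem inv_diag_mono_of_toeplitz_extension_general (n : ℕ) (c : ℕ → ℝ)
    (hC' : (toeplitz c (n + 1)).PosDef) (i : Fin n) :
    (toeplitz c n)⁻¹ i i ≤ (toeplitz c (n + 1))⁻¹ i.castSucc i.castSucc := by
  rw [toeplitz_eq_submatrix_castSucc]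
  exact hC'.inv_submatrix_apply_le (Fin.castSucc_injective n) i

/-- If C is a positive definite symmetric Toeplitz n×n matrix and C' is any
positive definite symmetric Toeplitz (n+1)×(n+1) extension of it (same Toeplitz sequence),
then for every index i, [C⁻¹]_{i,i} ≤ [C'⁻¹]_{i,i}: adding a measurement cannot increase
the LMMSE, i.e. the LMMSE of coordinate i from the other coordinates of {1,…,n} is at least
that from the other coordinates of {1,…,n+1}. -/
theorem inv_diag_mono_of_toeplitz_extension (n : ℕ) (c : ℕ → ℝ)
    (hC : (toeplitz c n).PosDef) (hC' : (toeplitz c (n + 1)).PosDef) (i : Fin n) :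
    (toeplitz c n)⁻¹ i i ≤ (toeplitz c (n + 1))⁻¹ i.castSucc i.castSucc :=
  inv_diag_mono_of_toeplitz_extension_general n c hC' i
end

section
/- Let v = (v_0,…,v_{n−1})ᵀ be the first column of T⁻¹ for an invertible symmetric Toeplitz n×n matrix T, with v_0 ≠ 0. Let V and U be the n×n lower-triangular Toeplitz matrices with first columns v and u = (0, v_{n−1}, v_{n−2}, …, v_1)ᵀ respectively. Then T⁻¹ = (1/v_0)(V Vᵀ − U Uᵀ). -/
/-!
Let `Z` be the down-shift matrix and call `X - Z X Zᵀ` the displacement of `X`. As `Z` is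
nilpotent, a matrix is determined by its displacement; and a lower-triangular Toeplitz matrix `L`
with first column `w` commutes with `Z`, so, since `1 - Z Zᵀ = e₀ e₀ᵀ`, the displacement of `L Lᵀ`
is `w wᵀ`. It therefore suffices to show that `B = T⁻¹` satisfies `v₀ (B - Z B Zᵀ) = v vᵀ - u uᵀ`.

That `T` is Toeplitz says exactly that `T Z - Z T = e₀ aᵀ - b eₙᵀ` has rank two. Conjugating by
`B` expresses `Z B - B Z`, hence the displacement of `B`, through `v = B e₀`, the last column
`B eₙ` (which is `v` reversed, by persymmetry), `B a` and `B b`. Applying the commutator identity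
to `B eₙ` gives `T u` with `u = Z B eₙ`, hence `B b` in terms of `v` and `u`. The remaining unknown `B a`
only enters a rank-one term `v pᵀ` with `p₀ = v₀`, and the symmetry of the displacement of `B`
forces `p = v`.
-/

open Matrix

/-- The lower-triangular Toeplitz matrix with first column w:
entries [W]_{i,j} = w_{i−j} for i ≥ j and 0 otherwise. -/
def lowerToeplitz {n : ℕ} (w : Fin n → ℝ) : Matrix (Fin n) (Fin n) ℝ :=
  Matrix.of fun i j => if h : (j : ℕ) ≤ (i : ℕ) then w ⟨(i : ℕ) - (j : ℕ), by omega⟩ else 0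

namespace Matrix

def shiftDown (R : Type*) [Zero R] [One R] (n : ℕ) : Matrix (Fin (n + 1)) (Fin (n + 1)) R :=
  of fun i j => if (i : ℕ) = j + 1 then 1 else 0

section Semiring

variable {R : Type*} [Semiring R] {n : ℕ}

@[simp]
theorem shiftDown_apply_zero (j : Fin (n + 1)) : shiftDown R n 0 j = 0 := by
  simp [shiftDown]

@[simp]
theorem shiftDown_apply_succ (i : Fin n) (j : Fin (n + 1)) :
    shiftDown R n i.succ j = if j = i.castSucc then 1 else 0 := by
  simp [shiftDown, Fin.ext_iff, eq_comm]

@[simp]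
theorem shiftDown_apply_castSucc (i : Fin (n + 1)) (j : Fin n) :
    shiftDown R n i j.castSucc = if i = j.succ then 1 else 0 := by
  simp [shiftDown, Fin.ext_iff]

@[simp]
theorem shiftDown_apply_last (i : Fin (n + 1)) : shiftDown R n i (Fin.last n) = 0 := by
  simp [shiftDown]
  omega

@[simp]
theorem shiftDown_mulVec_zero (x : Fin (n + 1) → R) : (shiftDown R n *ᵥ x) 0 = 0 := by
  simp [mulVec, dotProduct]

@[simp]
theorem shiftDown_mulVec_succ (x : Fin (n + 1) → R) (i : Fin n) :
    (shiftDown R n *ᵥ x) i.succ = x i.castSucc := by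
  simp [mulVec, dotProduct]

theorem shiftDown_mulVec_single_last : shiftDown R n *ᵥ Pi.single (Fin.last n) 1 = 0 := by
  ext i
  induction i using Fin.cases <;> simp [Fin.castSucc_ne_last]

@[simp]
theorem shiftDown_mul_apply_zero (X : Matrix (Fin (n + 1)) (Fin (n + 1)) R) (j : Fin (n + 1)) :
    (shiftDown R n * X) 0 j = 0 := by
  simp [mul_apply]

@[simp]
theorem shiftDown_mul_apply_succ (X : Matrix (Fin (n + 1)) (Fin (n + 1)) R) (i : Fin n)
    (j : Fin (n + 1)) : (shiftDown R n * X) i.succ j = X i.castSucc j := by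
  simp [mul_apply]

@[simp]
theorem mul_shiftDown_apply_castSucc (X : Matrix (Fin (n + 1)) (Fin (n + 1)) R)
    (i : Fin (n + 1)) (j : Fin n) : (X * shiftDown R n) i j.castSucc = X i j.succ := by
  simp [mul_apply]

@[simp]
theorem mul_shiftDown_apply_last (X : Matrix (Fin (n + 1)) (Fin (n + 1)) R) (i : Fin (n + 1)) :
    (X * shiftDown R n) i (Fin.last n) = 0 := by
  simp [mul_apply]

@[simp]
theorem mul_shiftDown_transpose_apply_zero (X : Matrix (Fin (n + 1)) (Fin (n + 1)) R)
    (i : Fin (n + 1)) : (X * (shiftDown R n)ᵀ) i 0 = 0 := by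
  simp [mul_apply]

@[simp]
theorem mul_shiftDown_transpose_apply_succ (X : Matrix (Fin (n + 1)) (Fin (n + 1)) R)
    (i : Fin (n + 1)) (j : Fin n) : (X * (shiftDown R n)ᵀ) i j.succ = X i j.castSucc := by
  simp [mul_apply]

end Semiring

theorem shiftDown_mul_transpose {R : Type*} [Ring R] {n : ℕ} :
    shiftDown R n * (shiftDown R n)ᵀ = 1 - vecMulVec (Pi.single 0 1) (Pi.single 0 1) := by
  ext i j
  induction j using Fin.cases with
  | zero => induction i using Fin.cases <;> simp [vecMulVec_apply]
  | succ j => induction i using Fin.cases <;> simp [one_apply, vecMulVec_apply]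

def displacement (R : Type*) [CommRing R] (n : ℕ) :
    Matrix (Fin (n + 1)) (Fin (n + 1)) R →ₗ[R] Matrix (Fin (n + 1)) (Fin (n + 1)) R where
  toFun X := X - shiftDown R n * X * (shiftDown R n)ᵀ
  map_add' X Y := by
    simp only [Matrix.mul_add, Matrix.add_mul]
    abel
  map_smul' r X := by
    simp only [Matrix.mul_smul, Matrix.smul_mul, smul_sub, RingHom.id_apply]

theorem displacement_apply {R : Type*} [CommRing R] {n : ℕ}
    (X : Matrix (Fin (n + 1)) (Fin (n + 1)) R) :
    displacement R n X = X - shiftDown R n * X * (shiftDown R n)ᵀ :=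
  rfl

theorem displacement_injective (R : Type*) [CommRing R] (n : ℕ) :
    Function.Injective (displacement R n) := by
  refine (injective_iff_map_eq_zero _).2 fun X hX => ?_
  have hX : X = shiftDown R n * X * (shiftDown R n)ᵀ := sub_eq_zero.1 hX
  have hzero (j) : X 0 j = 0 := by
    rw [hX, Matrix.mul_assoc]
    simp
  have hsucc (i j : Fin n) : X i.succ j.succ = X i.castSucc j.castSucc := by
    conv_lhs => rw [hX]
    simp
  ext i j
  induction i using Fin.induction generalizing j with
  | zero => exact hzero j
  | succ i ih =>
    induction j using Fin.cases with
    | zero => rw [hX]; simp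
    | succ j => rw [hsucc, ih]; rfl

theorem eq_of_vecMulVec_comm {K m : Type*} [Field K] {x y : m → K}
    (h : vecMulVec x y = vecMulVec y x) {i : m} (hx : x i ≠ 0) (hxy : y i = x i) : y = x := by
  funext j
  have hji := congrFun (congrFun h j) i
  simp only [vecMulVec_apply, hxy] at hji
  exact (mul_right_cancel₀ hx hji).symm

section InverseDisplacement

variable {K : Type*} [Field K] {n : ℕ} {T : Matrix (Fin (n + 1)) (Fin (n + 1)) K}
  {a b : Fin (n + 1) → K}

theorem inv_apply_rev_rev (hper : T.submatrix Fin.revPerm Fin.revPerm = T) (i j : Fin (n + 1)) :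
    T⁻¹ i.rev j.rev = T⁻¹ i j := by
  have h := congrArg Inv.inv hper
  rw [inv_submatrix_equiv] at h
  exact congrFun (congrFun h i) j

theorem shiftDown_mul_inv_sub_inv_mul_shiftDown (hT : IsUnit T.det) (hsymm : Tᵀ = T)
    (hcomm : T * shiftDown K n - shiftDown K n * T
      = vecMulVec (Pi.single 0 1) a - vecMulVec b (Pi.single (Fin.last n) 1)) :
    shiftDown K n * T⁻¹ - T⁻¹ * shiftDown K n
      = vecMulVec (fun i => T⁻¹ i 0) (T⁻¹ *ᵥ a)
        - vecMulVec (T⁻¹ *ᵥ b) (fun i => T⁻¹ i (Fin.last n)) := by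
  have hBsymm : T⁻¹ᵀ = T⁻¹ := by rw [transpose_nonsing_inv, hsymm]
  calc shiftDown K n * T⁻¹ - T⁻¹ * shiftDown K n
      = T⁻¹ * (T * shiftDown K n - shiftDown K n * T) * T⁻¹ := by
        simp only [Matrix.mul_sub, Matrix.sub_mul, ← Matrix.mul_assoc, nonsing_inv_mul T hT,
          Matrix.one_mul]
        rw [Matrix.mul_assoc _ T, mul_nonsing_inv T hT, Matrix.mul_one]
    _ = _ := by
      rw [hcomm, Matrix.mul_sub, Matrix.sub_mul, mul_vecMulVec, mul_vecMulVec, vecMulVec_mul,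
        vecMulVec_mul, ← hBsymm, vecMul_transpose, vecMul_transpose, hBsymm]
      simp only [mulVec_single_one]
      rfl

theorem inv_apply_zero_zero_smul_inv_mulVec (hT : IsUnit T.det)
    (hper : T.submatrix Fin.revPerm Fin.revPerm = T)
    (hcomm : T * shiftDown K n - shiftDown K n * T
      = vecMulVec (Pi.single 0 1) a - vecMulVec b (Pi.single (Fin.last n) 1)) :
    T⁻¹ 0 0 • (T⁻¹ *ᵥ b)
      = (a ⬝ᵥ fun i => T⁻¹ i.rev 0) • (fun i => T⁻¹ i 0)
        - shiftDown K n *ᵥ fun i => T⁻¹ i.rev 0 := by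
  set y : Fin (n + 1) → K := fun i => T⁻¹ i.rev 0
  have hy : T⁻¹ *ᵥ Pi.single (Fin.last n) 1 = y := by
    ext i
    rw [mulVec_single_one, col_apply, ← inv_apply_rev_rev hper, Fin.rev_last]
  have hTy : T *ᵥ y = Pi.single (Fin.last n) 1 := by
    rw [← hy, mulVec_mulVec, mul_nonsing_inv T hT, one_mulVec]
  have hTu : T *ᵥ (shiftDown K n *ᵥ y) = (a ⬝ᵥ y) • Pi.single 0 1 - T⁻¹ 0 0 • b := by
    calc T *ᵥ (shiftDown K n *ᵥ y)
        = shiftDown K n *ᵥ (T *ᵥ y) + (T * shiftDown K n - shiftDown K n * T) *ᵥ y := by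
          rw [sub_mulVec, mulVec_mulVec, mulVec_mulVec]
          abel
      _ = _ := by
          rw [hTy, shiftDown_mulVec_single_last, zero_add, hcomm, sub_mulVec, vecMulVec_mulVec,
            vecMulVec_mulVec, single_dotProduct, one_mul]
          simp [y]
  have hu : shiftDown K n *ᵥ y = T⁻¹ *ᵥ ((a ⬝ᵥ y) • Pi.single 0 1 - T⁻¹ 0 0 • b) := by
    rw [← hTu, mulVec_mulVec, nonsing_inv_mul T hT, one_mulVec]
  rw [hu, mulVec_sub, mulVec_smul, mulVec_smul, mulVec_single_one, col_apply', sub_sub_cancel]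

theorem inv_apply_zero_zero_smul_displacement_inv (hT : IsUnit T.det) (hsymm : Tᵀ = T)
    (hper : T.submatrix Fin.revPerm Fin.revPerm = T)
    (hcomm : T * shiftDown K n - shiftDown K n * T
      = vecMulVec (Pi.single 0 1) a - vecMulVec b (Pi.single (Fin.last n) 1))
    (hv0 : T⁻¹ 0 0 ≠ 0) :
    T⁻¹ 0 0 • displacement K n T⁻¹
      = vecMulVec (fun i => T⁻¹ i 0) (fun i => T⁻¹ i 0)
        - vecMulVec (shiftDown K n *ᵥ fun i => T⁻¹ i.rev 0)
            (shiftDown K n *ᵥ fun i => T⁻¹ i.rev 0) := by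
  rw [displacement_apply]
  set Z := shiftDown K n
  set v : Fin (n + 1) → K := fun i => T⁻¹ i 0
  set y : Fin (n + 1) → K := fun i => T⁻¹ i.rev 0
  set u := Z *ᵥ y
  have hlast : (fun i => T⁻¹ i (Fin.last n)) = y := by
    ext i
    rw [← inv_apply_rev_rev hper, Fin.rev_last]
  have hD : T⁻¹ - Z * T⁻¹ * Zᵀ
      = vecMulVec v (Pi.single 0 1 - Z *ᵥ (T⁻¹ *ᵥ a)) + vecMulVec (T⁻¹ *ᵥ b) u := by
    rw [← sub_add_cancel (Z * T⁻¹) (T⁻¹ * Z),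
      shiftDown_mul_inv_sub_inv_mul_shiftDown hT hsymm hcomm, hlast, Matrix.add_mul,
      Matrix.sub_mul, vecMulVec_mul, vecMulVec_mul, vecMul_transpose, vecMul_transpose,
      Matrix.mul_assoc, shiftDown_mul_transpose, Matrix.mul_sub, Matrix.mul_one, mul_vecMulVec,
      mulVec_single_one, vecMulVec_sub]
    abel
  set p := T⁻¹ 0 0 • (Pi.single 0 1 - Z *ᵥ (T⁻¹ *ᵥ a)) + (a ⬝ᵥ y) • u
  have hscaled : T⁻¹ 0 0 • (T⁻¹ - Z * T⁻¹ * Zᵀ) = vecMulVec v p - vecMulVec u u := by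
    rw [hD, smul_add, ← vecMulVec_smul, ← smul_vecMulVec,
      inv_apply_zero_zero_smul_inv_mulVec hT hper hcomm]
    ext i j
    simp only [Matrix.add_apply, Matrix.sub_apply, vecMulVec_apply, Pi.add_apply, Pi.sub_apply,
      Pi.smul_apply, smul_eq_mul, p, u, y, Z, v]
    ring
  have hsym : vecMulVec v p = vecMulVec p v := by
    have h := congrArg transpose hscaled
    rw [transpose_smul, transpose_sub, transpose_mul, transpose_mul, transpose_transpose,
      transpose_nonsing_inv, hsymm, ← Matrix.mul_assoc, hscaled, transpose_sub,
      transpose_vecMulVec, transpose_vecMulVec] at h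
    exact sub_left_inj.1 h
  have hp0 : p 0 = v 0 := by
    simp only [p, u, Pi.add_apply, Pi.smul_apply, Pi.sub_apply, shiftDown_mulVec_zero, Z]
    simp [v]
  rw [hscaled, eq_of_vecMulVec_comm hsym hv0 hp0]

end InverseDisplacement

end Matrix

theorem shiftDown_mul_lowerToeplitz {n : ℕ} (w : Fin (n + 1) → ℝ) :
    shiftDown ℝ n * lowerToeplitz w = lowerToeplitz w * shiftDown ℝ n := by
  ext i j
  induction i using Fin.cases <;> induction j using Fin.lastCases <;>
    simp [lowerToeplitz, Fin.le_castSucc_iff, Fin.not_lt.2 (Fin.le_last _)]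

theorem displacement_lowerToeplitz_mul_transpose {n : ℕ} (w : Fin (n + 1) → ℝ) :
    displacement ℝ n (lowerToeplitz w * (lowerToeplitz w)ᵀ) = vecMulVec w w := by
  set L := lowerToeplitz w
  have hL0 : L *ᵥ Pi.single 0 1 = w := by
    ext i
    simp [L, lowerToeplitz]
  calc displacement ℝ n (L * Lᵀ)
      = L * (1 - shiftDown ℝ n * (shiftDown ℝ n)ᵀ) * Lᵀ := by
        rw [displacement_apply, ← Matrix.mul_assoc, shiftDown_mul_lowerToeplitz, Matrix.mul_assoc,
          Matrix.mul_assoc, ← transpose_mul, shiftDown_mul_lowerToeplitz, transpose_mul]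
        simp only [Matrix.mul_sub, Matrix.sub_mul, Matrix.mul_one, Matrix.mul_assoc, L]
    _ = vecMulVec w w := by
      rw [shiftDown_mul_transpose, sub_sub_cancel, mul_vecMulVec, vecMulVec_mul, vecMul_transpose,
        hL0]

theorem toeplitz_transpose (c : ℕ → ℝ) (n : ℕ) : (toeplitz c n)ᵀ = toeplitz c n := by
  ext i j
  simp only [toeplitz, transpose_apply, of_apply]
  congr 1
  omega

theorem toeplitz_submatrix_rev (c : ℕ → ℝ) (n : ℕ) :
    (toeplitz c n).submatrix Fin.revPerm Fin.revPerm = toeplitz c n := by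
  ext i j
  simp only [toeplitz, submatrix_apply, of_apply, Fin.revPerm_apply, Fin.val_rev]
  congr 1
  omega

theorem toeplitz_mul_shiftDown_sub_shiftDown_mul_toeplitz (c : ℕ → ℝ) (n : ℕ) :
    toeplitz c (n + 1) * shiftDown ℝ n - shiftDown ℝ n * toeplitz c (n + 1)
      = vecMulVec (Pi.single 0 1) (fun k : Fin (n + 1) => c (k + 1))
        - vecMulVec (fun k : Fin (n + 1) => c (n + 1 - k)) (Pi.single (Fin.last n) 1) := by
  ext i j
  induction i using Fin.cases <;> induction j using Fin.lastCases <;>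
    simp [toeplitz, vecMulVec_apply]
  all_goals
    congr 1
    omega

/-- Gohberg–Semençul: let T be an invertible symmetric Toeplitz
(n+1)×(n+1) matrix, v the first column of T⁻¹ with v_0 ≠ 0, and
u = (0, v_n, v_{n−1}, …, v_1)ᵀ. With V, U the lower-triangular Toeplitz matrices with
first columns v and u, one has T⁻¹ = (1/v_0)(V Vᵀ − U Uᵀ). -/
theorem gohberg_semencul (n : ℕ) (c : ℕ → ℝ)
    (hT : IsUnit (toeplitz c (n + 1)).det)
    (v : Fin (n + 1) → ℝ) (hv : v = fun i => (toeplitz c (n + 1))⁻¹ i 0)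
    (hv0 : v 0 ≠ 0)
    (u : Fin (n + 1) → ℝ)
    (hu : u = fun i : Fin (n + 1) => if h : (i : ℕ) = 0 then 0 else v ⟨n + 1 - (i : ℕ), by omega⟩) :
    (toeplitz c (n + 1))⁻¹ =
      (1 / v 0) •
        (lowerToeplitz v * (lowerToeplitz v)ᵀ - lowerToeplitz u * (lowerToeplitz u)ᵀ) := by
  have hu_shift : u = shiftDown ℝ n *ᵥ fun i => v i.rev := by
    subst hu
    ext i
    induction i using Fin.cases with
    | zero => simp
    | succ i =>
      simp only [shiftDown_mulVec_succ, Fin.val_succ, Nat.add_one_ne_zero, dite_false]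
      congr 1
  subst hu_shift hv
  apply displacement_injective ℝ n
  rw [map_smul, map_sub, displacement_lowerToeplitz_mul_transpose,
    displacement_lowerToeplitz_mul_transpose,
    ← inv_apply_zero_zero_smul_displacement_inv hT (toeplitz_transpose c _)
      (toeplitz_submatrix_rev c _) (toeplitz_mul_shiftDown_sub_shiftDown_mul_toeplitz c n) hv0,
    smul_smul, one_div, inv_mul_cancel₀ hv0, one_smul]
end

section
/- Let a_0 = 1, a_1, …, a_p (a_p ≠ 0) and σ² > 0 define a stable AR(p) process with covariance sequence c_0, …, c_p (positive definite C_{p+1}). Among all c_{p+1} ∈ ℝ extending to an AR process of order at most p+1 consistent with c_0,…,c_p, the two-sided prediction LMMSE σ'²/Σ(a'_ℓ)² of the extended AR(p+1) process is maximized by c_{p+1} = c_{p+1}^{MaxEnt} + (α − sign(α)√(α²−1))·σ², where c_{p+1}^{MaxEnt} = −Σ_{ℓ=1}^{p} a_ℓ c_{p+1−ℓ} and α = (Σ_{ℓ=0}^{p} a_ℓ²)/(Σ_{ℓ=1}^{p} a_ℓ a_{p+1−ℓ}). -/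
open Matrix Finset

/-- The covariance sequence c with the value at lag p+1 set to x. -/
def cExt (c : ℕ → ℝ) (p : ℕ) (x : ℝ) : ℕ → ℝ := fun k => if k = p + 1 then x else c k

/-! The padded coefficient vector `b = (1, a₁, …, a_p, 0)` satisfies
`C_{p+2}(x) b = σ² e₀ + (x - c^{MaxEnt}) e_{p+1}`, and by persymmetry of Toeplitz matrices its
reversal satisfies the mirrored system. Hence for `t = (x - c^{MaxEnt}) / σ²` the vector
`b - t • rev b` solves the extended Yule–Walker system with innovation variance `σ² (1 - t²)`; it is
the only solution with leading entry `1`, because the trailing `(p+1)`-minor of `C_{p+2}(x)` is the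
positive definite `C_{p+1}`. So the LMMSE is `σ² (1 - t²) / ((1 + t²) A - 2 t B)` with
`A = ∑ a_ℓ²`, `B = ∑ a_ℓ a_{p+1-ℓ}`. Cross-multiplied, its gap to the value at a root `s` of
`B s² - 2 A s + B`, i.e. of `s² - 2 α s + 1`, is `2 σ² (A - s B) (t - s)²`, which is nonnegative
for the root `α - sign α √(α² - 1)` of modulus at most one. -/

section Toeplitz

variable (c : ℕ → ℝ) (n : ℕ)

lemma toeplitz_submatrix_castSucc :
    (toeplitz c (n + 1)).submatrix Fin.castSucc Fin.castSucc = toeplitz c n := by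
  ext i j
  simp [toeplitz]

lemma toeplitz_submatrix_succ :
    (toeplitz c (n + 1)).submatrix Fin.succ Fin.succ = toeplitz c n := by
  ext i j
  simp [toeplitz]

lemma toeplitz_rev_rev (i j : Fin n) : toeplitz c n i.rev j.rev = toeplitz c n i j := by
  simp only [toeplitz, of_apply, Fin.val_rev]
  congr 1
  omega

lemma toeplitz_mulVec_comp_rev (v : Fin n → ℝ) :
    toeplitz c n *ᵥ (v ∘ Fin.rev) = (toeplitz c n *ᵥ v) ∘ Fin.rev := by
  ext i
  simp only [mulVec, dotProduct, Function.comp_apply]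
  conv_rhs => rw [← Equiv.sum_comp Fin.revPerm]
  simp only [Fin.revPerm_apply, toeplitz_rev_rev]

end Toeplitz

lemma toeplitz_cExt (c : ℕ → ℝ) (p : ℕ) (x : ℝ) :
    toeplitz (cExt c p x) (p + 1) = toeplitz c (p + 1) := by
  ext i j
  simp only [toeplitz, cExt, of_apply]
  rw [if_neg (by omega)]

lemma eq_of_mulVec_eq_single {R : Type*} [CommRing R] [IsDomain R] {n : ℕ}
    {M : Matrix (Fin (n + 1)) (Fin (n + 1)) R} (hM : (M.submatrix Fin.succ Fin.succ).det ≠ 0)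
    {u w : Fin (n + 1) → R} {r s : R} (h0 : u 0 = w 0)
    (hu : M *ᵥ u = Pi.single 0 r) (hw : M *ᵥ w = Pi.single 0 s) : u = w := by
  set d := u - w
  have hd0 : d 0 = 0 := sub_eq_zero.mpr h0
  have hMd : M *ᵥ d = Pi.single 0 (r - s) := by rw [mulVec_sub, hu, hw, Pi.single_sub]
  have hd : M.submatrix Fin.succ Fin.succ *ᵥ (d ∘ Fin.succ) = 0 := by
    ext i
    simpa [mulVec, dotProduct, Fin.sum_univ_succ, hd0] using congrFun hMd i.succ
  have hd' := eq_zero_of_mulVec_eq_zero hM hd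
  exact sub_eq_zero.mp (funext fun i => Fin.cases hd0 (fun j => congrFun hd' j) i)

lemma dotProduct_sub_smul_comp_rev {n : ℕ} (v : Fin n → ℝ) (t : ℝ) :
    (v - t • (v ∘ Fin.rev)) ⬝ᵥ (v - t • (v ∘ Fin.rev)) =
      (1 + t ^ 2) * (v ⬝ᵥ v) - 2 * t * (v ⬝ᵥ (v ∘ Fin.rev)) := by
  have hrev : (v ∘ Fin.rev) ⬝ᵥ (v ∘ Fin.rev) = v ⬝ᵥ v :=
    Equiv.sum_comp Fin.revPerm (fun i => v i * v i)
  simp only [sub_dotProduct, dotProduct_sub, smul_dotProduct, dotProduct_smul, hrev,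
    dotProduct_comm (v ∘ Fin.rev) v, smul_eq_mul]
  ring

def padAR (a : ℕ → ℝ) (p : ℕ) : Fin (p + 2) → ℝ := fun j => if (j : ℕ) ≤ p then a j else 0

def maxEntCov (a c : ℕ → ℝ) (p : ℕ) : ℝ := -∑ ℓ ∈ Finset.Icc 1 p, a ℓ * c (p + 1 - ℓ)

lemma padAR_dotProduct_self (a : ℕ → ℝ) (p : ℕ) :
    padAR a p ⬝ᵥ padAR a p = ∑ ℓ ∈ range (p + 1), a ℓ ^ 2 := by
  rw [dotProduct, Fin.sum_univ_castSucc, ← Fin.sum_univ_eq_sum_range]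
  simp [padAR, sq, Fin.is_le]

lemma padAR_dotProduct_comp_rev (a : ℕ → ℝ) (p : ℕ) :
    padAR a p ⬝ᵥ (padAR a p ∘ Fin.rev) = ∑ ℓ ∈ Icc 1 p, a ℓ * a (p + 1 - ℓ) := by
  set f : ℕ → ℝ := fun ℓ =>
    (if ℓ ≤ p then a ℓ else 0) * (if p + 1 - ℓ ≤ p then a (p + 1 - ℓ) else 0)
  have hf (j : Fin (p + 2)) : padAR a p j * (padAR a p ∘ Fin.rev) j = f j := by
    simp only [padAR, Function.comp_apply, Fin.val_rev, f]
    rw [show p + 2 - (j + 1) = p + 1 - j by omega]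
  have hsub : Icc 1 p ⊆ range (p + 2) := fun ℓ hℓ => by
    simp only [Finset.mem_Icc, Finset.mem_range] at hℓ ⊢
    omega
  have hout : ∀ ℓ ∈ range (p + 2), ℓ ∉ Icc 1 p → f ℓ = 0 := fun ℓ hℓ hℓ' => by
    simp only [Finset.mem_Icc, Finset.mem_range] at hℓ hℓ'
    rcases Nat.eq_zero_or_pos ℓ with rfl | hpos
    · simp [f]
    · simp [f, show ¬ ℓ ≤ p by omega]
  rw [dotProduct, Fintype.sum_congr _ _ hf, Fin.sum_univ_eq_sum_range f,
    ← Finset.sum_subset hsub hout]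
  refine Finset.sum_congr rfl fun ℓ hℓ => ?_
  rw [Finset.mem_Icc] at hℓ
  simp only [f, if_pos hℓ.2, if_pos (show p + 1 - ℓ ≤ p by omega)]

lemma one_le_lmmse_denom {a : ℕ → ℝ} (p : ℕ) (ha0 : a 0 = 1) (t : ℝ) :
    1 ≤ (1 + t ^ 2) * ∑ ℓ ∈ range (p + 1), a ℓ ^ 2 -
      2 * t * ∑ ℓ ∈ Icc 1 p, a ℓ * a (p + 1 - ℓ) := by
  rw [← padAR_dotProduct_self, ← padAR_dotProduct_comp_rev, ← dotProduct_sub_smul_comp_rev]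
  set u := padAR a p - t • (padAR a p ∘ Fin.rev)
  have hu0 : u 0 = 1 := by simp [u, padAR, ha0]
  calc (1 : ℝ) = u 0 * u 0 := by rw [hu0, mul_one]
    _ ≤ u ⬝ᵥ u := Finset.single_le_sum (f := fun i => u i * u i)
      (fun i _ => mul_self_nonneg (u i)) (Finset.mem_univ 0)

section ARProcess

variable {p : ℕ} {a c : ℕ → ℝ} {σ2 : ℝ}

lemma toeplitz_cExt_mulVec_padAR (ha0 : a 0 = 1)
    (hYW : ∀ i : Fin (p + 1),
      ∑ j : Fin (p + 1), toeplitz c (p + 1) i j * a (j : ℕ) = if i = 0 then σ2 else 0) (x : ℝ) :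
    toeplitz (cExt c p x) (p + 2) *ᵥ padAR a p =
      Pi.single 0 σ2 + Pi.single (Fin.last _) (x - maxEntCov a c p) := by
  ext i
  induction i using Fin.lastCases with
  | last =>
    have hlag : ∀ ℓ ∈ Icc 1 p, cExt c p x (p + 1 - ℓ) * a ℓ = a ℓ * c (p + 1 - ℓ) := by
      intro ℓ hℓ
      rw [Finset.mem_Icc] at hℓ
      rw [cExt, if_neg (by omega), mul_comm]
    have hsum := Fin.sum_univ_eq_sum_range (fun j => cExt c p x (p + 1 - j) * a j) (p + 1)
    rw [Finset.range_eq_Ico, Finset.sum_eq_sum_Ico_succ_bot (by omega),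
      Finset.Ico_add_one_right_eq_Icc, Finset.sum_congr rfl hlag] at hsum
    have hrow (j : Fin (p + 1)) :
        toeplitz (cExt c p x) (p + 2) (Fin.last _) j.castSucc = cExt c p x (p + 1 - j) := by
      simp only [toeplitz, of_apply, Fin.val_last, Fin.val_castSucc]
      congr 1
      omega
    simp only [mulVec, dotProduct]
    rw [Fin.sum_univ_castSucc]
    simp only [padAR, Fin.val_castSucc, Fin.is_le, ite_true, hrow, hsum, Fin.val_last,
      Nat.not_succ_le_self, ite_false, mul_zero, add_zero]
    simp [cExt, ha0, maxEntCov]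
  | cast i =>
    have := hYW i
    rw [← toeplitz_cExt c p x, ← toeplitz_submatrix_castSucc] at this
    simpa [mulVec, dotProduct, Fin.sum_univ_castSucc, padAR, Pi.single_apply] using this

lemma toeplitz_cExt_mulVec_padAR_sub_smul_rev (ha0 : a 0 = 1)
    (hYW : ∀ i : Fin (p + 1),
      ∑ j : Fin (p + 1), toeplitz c (p + 1) i j * a (j : ℕ) = if i = 0 then σ2 else 0)
    {x t : ℝ} (ht : x - maxEntCov a c p = t * σ2) :
    toeplitz (cExt c p x) (p + 2) *ᵥ (padAR a p - t • (padAR a p ∘ Fin.rev)) =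
      Pi.single 0 (σ2 * (1 - t ^ 2)) := by
  rw [mulVec_sub, mulVec_smul, toeplitz_mulVec_comp_rev, toeplitz_cExt_mulVec_padAR ha0 hYW, ht]
  have hne : (0 : Fin (p + 2)) ≠ Fin.last _ := Fin.ext_iff.not.mpr (by simp)
  ext i
  by_cases h0 : i = 0
  · simp [h0, hne]
    ring
  by_cases hl : i = Fin.last _
  · simp [hl, hne.symm]
  · simp [h0, hl, Fin.rev_eq_iff]

lemma eq_padAR_sub_smul_rev_of_yuleWalker (ha0 : a 0 = 1) (hPD : (toeplitz c (p + 1)).PosDef)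
    (hYW : ∀ i : Fin (p + 1),
      ∑ j : Fin (p + 1), toeplitz c (p + 1) i j * a (j : ℕ) = if i = 0 then σ2 else 0)
    {x t : ℝ} (ht : x - maxEntCov a c p = t * σ2) {w : ℕ → ℝ} {s2 : ℝ} (hw0 : w 0 = 1)
    (hYWx : ∀ i : Fin (p + 2),
      ∑ j : Fin (p + 2), toeplitz (cExt c p x) (p + 2) i j * w (j : ℕ) = if i = 0 then s2 else 0) :
    (fun j : Fin (p + 2) => w j) = padAR a p - t • (padAR a p ∘ Fin.rev) ∧
      s2 = σ2 * (1 - t ^ 2) := by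
  have hw : toeplitz (cExt c p x) (p + 2) *ᵥ (fun j => w j) = Pi.single 0 s2 :=
    funext fun i => by simpa [mulVec, dotProduct, Pi.single_apply] using hYWx i
  have hu := toeplitz_cExt_mulVec_padAR_sub_smul_rev ha0 hYW ht
  have hdet : ((toeplitz (cExt c p x) (p + 2)).submatrix Fin.succ Fin.succ).det ≠ 0 := by
    rw [toeplitz_submatrix_succ, toeplitz_cExt]
    exact hPD.det_pos.ne'
  have heq := eq_of_mulVec_eq_single hdet (by simp [padAR, hw0, ha0]) hw hu
  refine ⟨heq, ?_⟩
  simpa [heq, hu] using (congrFun hw 0).symm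

lemma lmmse_eq_of_yuleWalker (ha0 : a 0 = 1) (hPD : (toeplitz c (p + 1)).PosDef)
    (hYW : ∀ i : Fin (p + 1),
      ∑ j : Fin (p + 1), toeplitz c (p + 1) i j * a (j : ℕ) = if i = 0 then σ2 else 0)
    {x t : ℝ} (ht : x - maxEntCov a c p = t * σ2) {w : ℕ → ℝ} {s2 : ℝ} (hw0 : w 0 = 1)
    (hYWx : ∀ i : Fin (p + 2),
      ∑ j : Fin (p + 2), toeplitz (cExt c p x) (p + 2) i j * w (j : ℕ) = if i = 0 then s2 else 0) :
    s2 / ∑ ℓ ∈ range (p + 2), w ℓ ^ 2 = σ2 * (1 - t ^ 2) / ((1 + t ^ 2) *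
      ∑ ℓ ∈ range (p + 1), a ℓ ^ 2 - 2 * t * ∑ ℓ ∈ Icc 1 p, a ℓ * a (p + 1 - ℓ)) := by
  obtain ⟨hw, rfl⟩ := eq_padAR_sub_smul_rev_of_yuleWalker ha0 hPD hYW ht hw0 hYWx
  have hsq : ∑ ℓ ∈ range (p + 2), w ℓ ^ 2 =
      (padAR a p - t • (padAR a p ∘ Fin.rev)) ⬝ᵥ (padAR a p - t • (padAR a p ∘ Fin.rev)) := by
    rw [← hw, ← Fin.sum_univ_eq_sum_range (fun ℓ => w ℓ ^ 2)]
    simp [dotProduct, sq]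
  rw [hsq, dotProduct_sub_smul_comp_rev, padAR_dotProduct_self, padAR_dotProduct_comp_rev]

end ARProcess

noncomputable def smallRoot (α : ℝ) : ℝ := α - Real.sign α * √(α ^ 2 - 1)

lemma smallRoot_spec {α : ℝ} (hα : 1 ≤ |α|) :
    smallRoot α ^ 2 - 2 * α * smallRoot α + 1 = 0 ∧ smallRoot α ^ 2 ≤ 1 := by
  have hr := Real.sq_sqrt (show 0 ≤ α ^ 2 - 1 by nlinarith [sq_abs α])
  have hr0 := Real.sqrt_nonneg (α ^ 2 - 1)
  rcases le_abs'.mp hα with h | h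
  · rw [smallRoot, Real.sign_of_neg (by linarith)]
    constructor <;> nlinarith
  · rw [smallRoot, Real.sign_of_pos (by linarith)]
    constructor <;> nlinarith

lemma quadratic_form_pos {A B : ℝ} (hBA : |B| < A) (t : ℝ) :
    0 < (1 + t ^ 2) * A - 2 * t * B := by
  have ht : 2 * t * B ≤ (1 + t ^ 2) * |B| := by
    have h₁ := mul_nonneg (abs_nonneg B) (sq_nonneg (t - 1))
    have h₂ := mul_nonneg (abs_nonneg B) (sq_nonneg (t + 1))
    rcases abs_cases B with ⟨hB, -⟩ | ⟨hB, -⟩ <;> nlinarith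
  nlinarith [mul_lt_mul_of_pos_left hBA (show 0 < 1 + t ^ 2 by positivity)]

lemma div_le_div_of_quadratic_root {A B σ2 s : ℝ} (hσ : 0 ≤ σ2) (hBA : |B| < A)
    (hs : B * s ^ 2 - 2 * A * s + B = 0) (hs1 : s ^ 2 ≤ 1) (t : ℝ) :
    σ2 * (1 - t ^ 2) / ((1 + t ^ 2) * A - 2 * t * B) ≤
      σ2 * (1 - s ^ 2) / ((1 + s ^ 2) * A - 2 * s * B) := by
  rw [div_le_div_iff₀ (quadratic_form_pos hBA t) (quadratic_form_pos hBA s)]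
  have hcoef : s * B ≤ A := by
    refine (le_abs_self _).trans ((abs_mul s B).trans_le ?_ |>.trans hBA.le)
    exact mul_le_of_le_one_left (abs_nonneg B) (sq_le_one_iff_abs_le_one s |>.mp hs1)
  have key : σ2 * (1 - s ^ 2) * ((1 + t ^ 2) * A - 2 * t * B) -
      σ2 * (1 - t ^ 2) * ((1 + s ^ 2) * A - 2 * s * B) =
        2 * σ2 * (A - s * B) * (t - s) ^ 2 := by
    linear_combination (2 * σ2 * (s - t)) * hs
  nlinarith [mul_nonneg (mul_nonneg hσ (sub_nonneg.mpr hcoef)) (sq_nonneg (t - s))]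

theorem maxTSP_completion_general (p : ℕ) (a : ℕ → ℝ) (σ2 : ℝ) (c : ℕ → ℝ)
    (ha0 : a 0 = 1) (hσ : 0 < σ2)
    (hPD : (toeplitz c (p + 1)).PosDef)
    (hYW : ∀ i : Fin (p + 1),
      ∑ j : Fin (p + 1), toeplitz c (p + 1) i j * a (j : ℕ) = if i = 0 then σ2 else 0)
    (hden : ∑ ℓ ∈ Finset.Icc 1 p, a ℓ * a (p + 1 - ℓ) ≠ 0)
    (α : ℝ)
    (hα : α = (∑ ℓ ∈ Finset.range (p + 1), a ℓ ^ 2) /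
      (∑ ℓ ∈ Finset.Icc 1 p, a ℓ * a (p + 1 - ℓ)))
    (cME cstar : ℝ)
    (hcME : cME = -∑ ℓ ∈ Finset.Icc 1 p, a ℓ * c (p + 1 - ℓ))
    (hcstar : cstar = cME + (α - Real.sign α * Real.sqrt (α ^ 2 - 1)) * σ2) :
    ∀ (x : ℝ), (toeplitz (cExt c p x) (p + 2)).PosDef →
      ∀ (a' : ℕ → ℝ) (σ'2 : ℝ), a' 0 = 1 →
        (∀ i : Fin (p + 2),
          ∑ j : Fin (p + 2), toeplitz (cExt c p x) (p + 2) i j * a' (j : ℕ) =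
            if i = 0 then σ'2 else 0) →
      ∀ (astar : ℕ → ℝ) (σstar2 : ℝ), astar 0 = 1 →
        (∀ i : Fin (p + 2),
          ∑ j : Fin (p + 2), toeplitz (cExt c p cstar) (p + 2) i j * astar (j : ℕ) =
            if i = 0 then σstar2 else 0) →
        σ'2 / (∑ ℓ ∈ Finset.range (p + 2), a' ℓ ^ 2) ≤
          σstar2 / (∑ ℓ ∈ Finset.range (p + 2), astar ℓ ^ 2) := by
  intro x _ a' σ'2 ha'0 hYW' astar σstar2 hastar0 hYWstar
  change cME = maxEntCov a c p at hcME
  change cstar = cME + smallRoot α * σ2 at hcstar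
  set A := ∑ ℓ ∈ range (p + 1), a ℓ ^ 2
  set B := ∑ ℓ ∈ Icc 1 p, a ℓ * a (p + 1 - ℓ)
  have hBA : |B| < A := by
    have h₁ := one_le_lmmse_denom p ha0 1
    have h₂ := one_le_lmmse_denom p ha0 (-1)
    exact abs_lt.mpr ⟨by linarith, by linarith⟩
  have hAB : A = α * B := by rw [hα, div_mul_cancel₀ _ hden]
  have hα1 : 1 ≤ |α| := by
    have hA : A = |α| * |B| := by
      rw [← abs_mul, ← hAB, abs_of_pos ((abs_nonneg B).trans_lt hBA)]
    exact (le_mul_iff_one_le_left (abs_pos.mpr hden)).mp (hA ▸ hBA.le)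
  obtain ⟨hroot, hroot1⟩ := smallRoot_spec hα1
  rw [lmmse_eq_of_yuleWalker ha0 hPD hYW (t := (x - cME) / σ2) (by rw [← hcME]; field_simp)
      ha'0 hYW',
    lmmse_eq_of_yuleWalker ha0 hPD hYW (t := smallRoot α) (by rw [← hcME, hcstar]; ring)
      hastar0 hYWstar]
  refine div_le_div_of_quadratic_root hσ.le hBA ?_ hroot1 _
  linear_combination B * hroot - 2 * smallRoot α * hAB

/-- given a stable AR(p) process (a_0 = 1, a_p ≠ 0, innovation variance σ²,
Yule–Walker: C_{p+1}·a = σ²e₁, C_{p+1} positive definite), among all admissible covariance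
extensions c_{p+1} = x (i.e. those yielding a positive definite C_{p+2} and hence an AR
process of order at most p+1, with coefficients a' and innovation variance σ'² solving the
extended Yule–Walker equations), the two-sided prediction LMMSE σ'²/Σ(a'_ℓ)² is maximized
by x = c_{p+1}^{MaxEnt} + (α − sign(α)√(α²−1))·σ², where
c_{p+1}^{MaxEnt} = −Σ_{ℓ=1}^{p} a_ℓ c_{p+1−ℓ} and
α = (Σ_{ℓ=0}^{p} a_ℓ²)/(Σ_{ℓ=1}^{p} a_ℓ a_{p+1−ℓ}). -/
theorem maxTSP_completion (p : ℕ) (hp : 0 < p) (a : ℕ → ℝ) (σ2 : ℝ) (c : ℕ → ℝ)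
    (ha0 : a 0 = 1) (hap : a p ≠ 0) (hσ : 0 < σ2)
    (hPD : (toeplitz c (p + 1)).PosDef)
    (hYW : ∀ i : Fin (p + 1),
      ∑ j : Fin (p + 1), toeplitz c (p + 1) i j * a (j : ℕ) = if i = 0 then σ2 else 0)
    (hden : ∑ ℓ ∈ Finset.Icc 1 p, a ℓ * a (p + 1 - ℓ) ≠ 0)
    (α : ℝ)
    (hα : α = (∑ ℓ ∈ Finset.range (p + 1), a ℓ ^ 2) /
      (∑ ℓ ∈ Finset.Icc 1 p, a ℓ * a (p + 1 - ℓ)))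
    (cME cstar : ℝ)
    (hcME : cME = -∑ ℓ ∈ Finset.Icc 1 p, a ℓ * c (p + 1 - ℓ))
    (hcstar : cstar = cME + (α - Real.sign α * Real.sqrt (α ^ 2 - 1)) * σ2) :
    ∀ (x : ℝ), (toeplitz (cExt c p x) (p + 2)).PosDef →
      ∀ (a' : ℕ → ℝ) (σ'2 : ℝ), a' 0 = 1 →
        (∀ i : Fin (p + 2),
          ∑ j : Fin (p + 2), toeplitz (cExt c p x) (p + 2) i j * a' (j : ℕ) =
            if i = 0 then σ'2 else 0) →
      ∀ (astar : ℕ → ℝ) (σstar2 : ℝ), astar 0 = 1 →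
        (∀ i : Fin (p + 2),
          ∑ j : Fin (p + 2), toeplitz (cExt c p cstar) (p + 2) i j * astar (j : ℕ) =
            if i = 0 then σstar2 else 0) →
        σ'2 / (∑ ℓ ∈ Finset.range (p + 2), a' ℓ ^ 2) ≤
          σstar2 / (∑ ℓ ∈ Finset.range (p + 2), astar ℓ ^ 2) :=
  maxTSP_completion_general p a σ2 c ha0 hσ hPD hYW hden α hα cME cstar hcME hcstar
end
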